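/- arXiv:1903.10413 — 2 statements merged into one kernel-verified Lean document; each statement's English description precedes it below -/
import Mathlib

section
/- Let n ≥ 2, m = ⌊n/2⌋, and let α be a multiplicative character of the finite field k_n of cardinality q^n. The multiset {α^{q^i+q^j} : 0 ≤ i < j ≤ n−1} of characters of k_n^× is partitioned into the Frobenius-generated multisets h_1, …, h_m, where for 1 ≤ j < n/2, h_j = {(α^{1+q^j})^{q^t} : 0 ≤ t ≤ n−1} (a multiset of size n), and, if n = 2m is even, h_m = {(α^{1+q^m})^{q^t} : 0 ≤ t ≤ m−1} (a multiset of size m). In particular, binom(n,2) = (m−1)·n + size(h_m) when n is even, and binom(n,2) = m·n when n is odd. -/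
/-!
Write `φ i` for the Frobenius twist `α^(q^i)`. Since `x^(q^n) = x` on `k_n`, the sequence `φ` is
`n`-periodic, and `α^(q^i + q^j) = φ i * φ j`. A pair `i < j` of `[0, n)` is determined by its
cyclic gap `d = min (j - i) (n - (j - i)) ∈ [1, n/2]` together with the endpoint `t` from which
`t, t + d` (read mod `n`) is the pair; this `t` ranges over all of `[0, n)`, except for the
antipodal gap `d = n/2` (`n` even), where `t` and `t + n/2` give the same pair and `t < n/2`.
The pair with gap `d` and start `t` contributes `φ t * φ (t + d) = (α^(1 + q^d))^(q^t)`.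
-/

open Finset

/-- The pair `{t, t + j mod n}` of `[0, n)`, listed in increasing order. -/
def pairOfGap (n j t : ℕ) : ℕ × ℕ :=
  if t + j < n then (t, t + j) else (t + j - n, t)

def gapStarts (n : ℕ) : Finset (Σ _ : ℕ, ℕ) :=
  (Icc 1 (n / 2)).sigma fun j => range (if n = 2 * j then n / 2 else n)

theorem image_pairOfGap (n : ℕ) :
    (gapStarts n).image (fun p => pairOfGap n p.1 p.2) =
      (range n ×ˢ range n).filter fun p => p.1 < p.2 := by
  ext ⟨a, b⟩
  simp only [gapStarts, pairOfGap, mem_image, mem_sigma, mem_Icc, mem_range, mem_filter,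
    mem_product, Sigma.exists]
  constructor
  · rintro ⟨j, t, ⟨hj, ht⟩, hab⟩
    split_ifs at ht hab <;> simp only [Prod.mk.injEq] at hab <;> omega
  · rintro ⟨⟨ha, hb⟩, hab⟩
    by_cases hd : b - a ≤ n / 2
    · refine ⟨b - a, a, ⟨by omega, by split_ifs <;> omega⟩, ?_⟩
      rw [if_pos (by omega)]
      simp only [Prod.mk.injEq, true_and]
      omega
    · refine ⟨n - (b - a), b, ⟨by omega, by split_ifs <;> omega⟩, ?_⟩
      rw [if_neg (by omega)]
      simp only [Prod.mk.injEq, and_true]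
      omega

theorem injOn_pairOfGap (n : ℕ) :
    Set.InjOn (fun p : Σ _ : ℕ, ℕ => pairOfGap n p.1 p.2) (gapStarts n) := by
  rintro ⟨j, t⟩ hjt ⟨j', t'⟩ hjt' h
  simp only [gapStarts, coe_sigma, Set.mem_sigma_iff, coe_Icc, Set.mem_Icc, coe_range,
    Set.mem_Iio] at hjt hjt'
  obtain ⟨hj, ht⟩ := hjt
  obtain ⟨hj', ht'⟩ := hjt'
  obtain ⟨rfl, rfl⟩ : j = j' ∧ t = t' := by
    simp only [pairOfGap] at h
    split_ifs at ht ht' h <;> simp only [Prod.mk.injEq] at h <;> omega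
  rfl

theorem Function.Periodic.map_mul_pairs_eq_bind_gaps {M : Type*} [CommMagma M] {φ : ℕ → M}
    {n : ℕ} (hφ : Function.Periodic φ n) :
    ((range n ×ˢ range n).filter fun p => p.1 < p.2).val.map (fun p => φ p.1 * φ p.2) =
      (Icc 1 (n / 2)).val.bind fun j =>
        (Multiset.range (if n = 2 * j then n / 2 else n)).map fun t => φ t * φ (t + j) := by
  rw [← image_pairOfGap, image_val_of_injOn (injOn_pairOfGap n), Multiset.map_map]
  have hval : (gapStarts n).val = (Icc 1 (n / 2)).val.bind fun j =>
      (Multiset.range (if n = 2 * j then n / 2 else n)).map (Sigma.mk j) := rfl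
  rw [hval, Multiset.map_bind]
  refine Multiset.bind_congr fun j _ => ?_
  rw [Multiset.map_map]
  refine Multiset.map_congr rfl fun t _ => ?_
  simp only [Function.comp_apply, pairOfGap]
  split_ifs with h
  · rfl
  · dsimp only
    rw [mul_comm, ← hφ (t + j - n), Nat.sub_add_cancel (by omega)]

theorem FiniteField.units_pow_card {K : Type*} [Field K] [Fintype K] (x : Kˣ) :
    x ^ Fintype.card K = x :=
  Units.ext (by push_cast; exact FiniteField.pow_card _)

theorem periodic_comp_powMonoidHom_pow {K G : Type*} [Field K] [Fintype K] [Monoid G] {q n : ℕ}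
    (hcard : Fintype.card K = q ^ n) (α : Kˣ →* G) :
    Function.Periodic (fun i => α.comp (powMonoidHom (q ^ i))) n := fun i => by
  ext x
  simp only [MonoidHom.comp_apply, powMonoidHom_apply, pow_add, pow_mul, ← hcard,
    FiniteField.units_pow_card]

theorem Nat.choose_two_of_even {n : ℕ} (h : Even n) : n.choose 2 = (n / 2 - 1) * n + n / 2 := by
  obtain ⟨_ | k, rfl⟩ := h
  · rfl
  have hhalf : (k + 1 + (k + 1)) / 2 = k + 1 := by omega
  have hpred : k + 1 + (k + 1) - 1 = 2 * k + 1 := by omega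
  rw [Nat.choose_two_right, hhalf, hpred, Nat.add_sub_cancel]
  exact Nat.div_eq_of_eq_mul_left two_pos (by ring)

theorem Nat.choose_two_of_odd {n : ℕ} (h : Odd n) : n.choose 2 = n / 2 * n := by
  obtain ⟨k, rfl⟩ := h
  have hhalf : (2 * k + 1) / 2 = k := by omega
  rw [Nat.choose_two_right, hhalf, Nat.add_sub_cancel]
  exact Nat.div_eq_of_eq_mul_left two_pos (by ring)

theorem stmt13_general (K : Type*) [Field K] [Fintype K] (q n m : ℕ) (hm : m = n / 2)
    (hcard : Fintype.card K = q ^ n) (α : Kˣ →* ℂˣ) :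
    (((Finset.range n ×ˢ Finset.range n).filter (fun p => p.1 < p.2)).val.map
        (fun p => α.comp (powMonoidHom (q ^ p.1)) * α.comp (powMonoidHom (q ^ p.2)))
      = (Finset.Icc 1 m).val.bind
          (fun j => (Multiset.range (if n = 2 * j then m else n)).map
            (fun t => (α * α.comp (powMonoidHom (q ^ j))).comp (powMonoidHom (q ^ t))))) ∧
    (Even n → n.choose 2 = (m - 1) * n + m) ∧
    (Odd n → n.choose 2 = m * n) := by
  subst hm
  refine ⟨?_, Nat.choose_two_of_even, Nat.choose_two_of_odd⟩
  refine ((periodic_comp_powMonoidHom_pow hcard α).map_mul_pairs_eq_bind_gaps).trans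
    (Multiset.bind_congr fun j _ => Multiset.map_congr rfl fun t _ => ?_)
  ext x
  simp only [MonoidHom.mul_apply, MonoidHom.comp_apply, powMonoidHom_apply, pow_add, pow_mul]

/-- the multiset `{α^{q^i+q^j} : 0 ≤ i < j ≤ n-1}` is the union of the
Frobenius-generated multisets `h_1, …, h_m` (`m = ⌊n/2⌋`), where `h_j` is generated by
`α^{1+q^j}` over `t ∈ [0,n)`, except `h_m` is generated over `t ∈ [0,m)` when `n = 2m`.
In particular `C(n,2) = (m-1)n + m` for even `n` and `C(n,2) = mn` for odd `n`. -/
theorem stmt13 (K : Type*) [Field K] [Fintype K] (q n m : ℕ) (hn : 2 ≤ n) (hm : m = n / 2)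
    (hcard : Fintype.card K = q ^ n) (α : Kˣ →* ℂˣ) :
    (((Finset.range n ×ˢ Finset.range n).filter (fun p => p.1 < p.2)).val.map
        (fun p => α.comp (powMonoidHom (q ^ p.1)) * α.comp (powMonoidHom (q ^ p.2)))
      = (Finset.Icc 1 m).val.bind
          (fun j => (Multiset.range (if n = 2 * j then m else n)).map
            (fun t => (α * α.comp (powMonoidHom (q ^ j))).comp (powMonoidHom (q ^ t))))) ∧
    (Even n → n.choose 2 = (m - 1) * n + m) ∧
    (Odd n → n.choose 2 = m * n) :=
  stmt13_general K q n m hm hcard α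
end

section
/- Let n, m be coprime positive integers, α a multiplicative character of k_n^× and β a multiplicative character of k_m^×. Then the character αβ of k_{nm}^× defined by (αβ)(x) = α(N_{k_{nm}/k_n}(x))·β(N_{k_{nm}/k_m}(x)) satisfies: the multiset {α^{q^i}β^{q^j} : 0 ≤ i < n, 0 ≤ j < m} of characters of k_{nm}^× equals the single Frobenius-generated multiset {(αβ)^{q^t} : 0 ≤ t < nm}. -/
/-!
Raising to the `q^t`-th power on `k_n` only depends on `t mod n`, so the twist of `α ∘ N` by
`q^t` is the twist by `q^(t mod n)`, and likewise for `β ∘ N` modulo `m`. Hence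
`(αβ)^{q^t} = α^{q^(t mod n)} β^{q^(t mod m)}`, and by the Chinese remainder theorem
`t ↦ (t mod n, t mod m)` is a bijection from `[0, nm)` onto `[0, n) × [0, m)`.
-/

theorem FiniteField.pow_pow_eq_pow_pow_mod {K : Type*} [Field K] [Fintype K] {q n : ℕ}
    (h : Fintype.card K = q ^ n) (x : K) (t : ℕ) :
    x ^ q ^ t = x ^ q ^ (t % n) := by
  conv_lhs => rw [← Nat.mod_add_div t n, pow_add, pow_mul, pow_mul, ← h,
    FiniteField.pow_card_pow]

theorem MonoidHom.comp_powMonoidHom_pow_eq_pow_mod {K M G : Type*} [Field K] [Fintype K]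
    [CommMonoid M] [Monoid G] {q n : ℕ} (h : Fintype.card K = q ^ n)
    (χ : Kˣ →* G) (ψ : M →* Kˣ) (t : ℕ) :
    (χ.comp ψ).comp (powMonoidHom (q ^ t)) = (χ.comp ψ).comp (powMonoidHom (q ^ (t % n))) := by
  ext x
  have hψ : ψ (x ^ q ^ t) = ψ (x ^ q ^ (t % n)) := by
    ext
    rw [map_pow, map_pow, Units.val_pow_eq_pow_val, Units.val_pow_eq_pow_val,
      FiniteField.pow_pow_eq_pow_pow_mod h _ t]
  simp only [MonoidHom.comp_apply, powMonoidHom_apply, hψ]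

theorem Nat.Coprime.map_range_mul_mod_mod {n m : ℕ} (hcop : Nat.Coprime n m) :
    (Multiset.range (n * m)).map (fun t => (t % n, t % m)) =
      (Finset.range n ×ˢ Finset.range m).val := by
  have hinj : Set.InjOn (fun t => (t % n, t % m)) (Finset.range (n * m)) := by
    intro a ha b hb hab
    simp only [Finset.coe_range, Set.mem_Iio] at ha hb
    have hmod : a % (n * m) = b % (n * m) :=
      (Nat.modEq_and_modEq_iff_modEq_mul hcop).mp (Prod.ext_iff.mp hab)
    rwa [Nat.mod_eq_of_lt ha, Nat.mod_eq_of_lt hb] at hmod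
  have himage : (Finset.range (n * m)).image (fun t => (t % n, t % m)) =
      Finset.range n ×ˢ Finset.range m := by
    refine Finset.eq_of_subset_of_card_le ?_ (by simp [Finset.card_image_of_injOn hinj])
    intro p hp
    obtain ⟨t, ht, rfl⟩ := Finset.mem_image.mp hp
    have hpos : 0 < n * m := (Nat.zero_le t).trans_lt (Finset.mem_range.mp ht)
    simp only [Finset.mem_product, Finset.mem_range]
    exact ⟨Nat.mod_lt _ (Nat.pos_of_mul_pos_right hpos),
      Nat.mod_lt _ (Nat.pos_of_mul_pos_left hpos)⟩
  rw [← himage, Finset.image_val_of_injOn hinj, Finset.range_val]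

theorem stmt16_general (km kn kl : Type*) [Field km] [Field kn] [Field kl]
    [Fintype km] [Fintype kn] [Algebra km kl] [Algebra kn kl]
    (q n m : ℕ) (hcop : Nat.Coprime n m)
    (hqm : Fintype.card km = q ^ m) (hqn : Fintype.card kn = q ^ n)
    (α : knˣ →* ℂˣ) (β : kmˣ →* ℂˣ) :
    ((Finset.range n ×ˢ Finset.range m)).val.map
        (fun p =>
          (α.comp (Units.map (Algebra.norm kn : kl →* kn))).comp (powMonoidHom (q ^ p.1)) *
          (β.comp (Units.map (Algebra.norm km : kl →* km))).comp (powMonoidHom (q ^ p.2)))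
      = (Multiset.range (n * m)).map
          (fun t =>
            ((α.comp (Units.map (Algebra.norm kn : kl →* kn))) *
              (β.comp (Units.map (Algebra.norm km : kl →* km)))).comp
                (powMonoidHom (q ^ t))) := by
  rw [← hcop.map_range_mul_mod_mod, Multiset.map_map]
  refine Multiset.map_congr rfl fun t _ => ?_
  rw [Function.comp_apply, MonoidHom.mul_comp,
    MonoidHom.comp_powMonoidHom_pow_eq_pow_mod hqn _ _ t,
    MonoidHom.comp_powMonoidHom_pow_eq_pow_mod hqm _ _ t]

/-- for coprime `n, m` and characters `α` of `k_n^×`, `β` of `k_m^×` lifted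
to `k_{nm}^×` via the norms, the multiset `{α^{q^i}β^{q^j} : 0 ≤ i < n, 0 ≤ j < m}` equals
the single Frobenius-generated multiset `{(αβ)^{q^t} : 0 ≤ t < nm}`. -/
theorem stmt16 (km kn kl : Type*) [Field km] [Field kn] [Field kl]
    [Fintype km] [Fintype kn] [Fintype kl] [Algebra km kl] [Algebra kn kl]
    (q n m : ℕ) (hn : 0 < n) (hm : 0 < m) (hcop : Nat.Coprime n m)
    (hqm : Fintype.card km = q ^ m) (hqn : Fintype.card kn = q ^ n)
    (hql : Fintype.card kl = q ^ (n * m))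
    (α : knˣ →* ℂˣ) (β : kmˣ →* ℂˣ) :
    ((Finset.range n ×ˢ Finset.range m)).val.map
        (fun p =>
          (α.comp (Units.map (Algebra.norm kn : kl →* kn))).comp (powMonoidHom (q ^ p.1)) *
          (β.comp (Units.map (Algebra.norm km : kl →* km))).comp (powMonoidHom (q ^ p.2)))
      = (Multiset.range (n * m)).map
          (fun t =>
            ((α.comp (Units.map (Algebra.norm kn : kl →* kn))) *
              (β.comp (Units.map (Algebra.norm km : kl →* km)))).comp
                (powMonoidHom (q ^ t))) :=
  stmt16_general km kn kl q n m hcop hqm hqn α β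
end
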